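/- Let a, b, c be pairwise distinct complex numbers and x, y complex numbers. Then |(x-a)(y-a)|/(|b-a||c-a|) − |(x-b)(y-b)|/(|a-b||c-b|) − |(x-c)(y-c)|/(|a-c||b-c|) = 1 holds if and only if (x-a)(y-a)/((b-a)(c-a)) is a nonnegative real and both (x-b)(y-b)/((a-b)(c-b)) and (x-c)(y-c)/((a-c)(b-c)) are nonpositive reals. -/

import Mathlib

/-!
The quotients `u = (x - a)(y - a)/((b - a)(c - a))`, `v`, `w` sum to `1`, being the second
divided difference of the monic quadratic `(t - x)(t - y)` at the nodes `a, b, c`. Hence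
`‖u‖ = ‖1 + (-v) + (-w)‖ ≤ 1 + ‖v‖ + ‖w‖`, with equality exactly when `-v` and `-w` lie on the
ray of `1`, i.e. are nonnegative reals.
-/

open Complex

theorem lagrange_quadratic_sum_eq_one {K : Type*} [Field K] {a b c : K}
    (hab : a ≠ b) (hac : a ≠ c) (hbc : b ≠ c) (x y : K) :
    (x - a) * (y - a) / ((b - a) * (c - a)) + (x - b) * (y - b) / ((a - b) * (c - b)) +
      (x - c) * (y - c) / ((a - c) * (b - c)) = 1 := by
  have hab' := sub_ne_zero.2 hab
  have hac' := sub_ne_zero.2 hac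
  have hbc' := sub_ne_zero.2 hbc
  have hba' := sub_ne_zero.2 hab.symm
  have hca' := sub_ne_zero.2 hac.symm
  have hcb' := sub_ne_zero.2 hbc.symm
  field_simp
  ring

theorem Complex.exists_nonneg_eq_of_norm_ofReal_add {r : ℝ} (hr : 0 < r) {z : ℂ}
    (h : ‖(r : ℂ) + z‖ = r + ‖z‖) : ∃ s : ℝ, 0 ≤ s ∧ z = s := by
  have hray : SameRay ℝ (r : ℂ) z := by
    rw [sameRay_iff_norm_add, h, norm_real, Real.norm_of_nonneg hr.le]
  obtain ⟨t, ht, hz⟩ := hray.exists_nonneg_left (ofReal_ne_zero.2 hr.ne')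
  exact ⟨t * r, mul_nonneg ht hr.le, by rw [← hz, real_smul, ofReal_mul]⟩

theorem Complex.norm_sub_norm_sub_norm_eq_one_iff {u v w : ℂ} (hsum : u + v + w = 1) :
    ‖u‖ - ‖v‖ - ‖w‖ = 1 ↔
      (∃ r : ℝ, 0 ≤ r ∧ u = r) ∧ (∃ r : ℝ, r ≤ 0 ∧ v = r) ∧ (∃ r : ℝ, r ≤ 0 ∧ w = r) := by
  constructor
  · intro h
    have hu : u = (1 + -v) + -w := by linear_combination hsum
    have htri₁ := norm_add_le (1 + -v) (-w)
    have htri₂ := norm_add_le (1 : ℂ) (-v)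
    rw [norm_neg] at htri₁ htri₂
    rw [norm_one] at htri₂
    rw [← hu] at htri₁
    have heq₁ : ‖(1 : ℂ) + -v‖ = 1 + ‖-v‖ := by rw [norm_neg]; linarith
    have heq₂ : ‖(1 + -v) + -w‖ = ‖1 + -v‖ + ‖-w‖ := by rw [← hu, norm_neg]; linarith
    obtain ⟨p, hp, hvp⟩ := exists_nonneg_eq_of_norm_ofReal_add one_pos (by exact_mod_cast heq₁)
    have h1v : 1 + -v = ((1 + p : ℝ) : ℂ) := by rw [hvp]; push_cast; ring
    rw [h1v, norm_real, Real.norm_of_nonneg (by linarith)] at heq₂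
    obtain ⟨q, hq, hwq⟩ := exists_nonneg_eq_of_norm_ofReal_add (by linarith) heq₂
    refine ⟨⟨1 + p + q, by linarith, ?_⟩, ⟨-p, by linarith, ?_⟩, ⟨-q, by linarith, ?_⟩⟩
    · rw [hu, h1v, hwq]; push_cast; ring
    · rw [ofReal_neg, ← hvp, neg_neg]
    · rw [ofReal_neg, ← hwq, neg_neg]
  · rintro ⟨⟨r, hr, rfl⟩, ⟨s, hs, rfl⟩, ⟨t, ht, rfl⟩⟩
    have hrst : r + s + t = 1 := by exact_mod_cast hsum
    simp only [norm_real, Real.norm_eq_abs, abs_of_nonneg hr, abs_of_nonpos hs,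
      abs_of_nonpos ht]
    linarith

theorem stmt_4 (a b c x y : ℂ) (hab : a ≠ b) (hac : a ≠ c) (hbc : b ≠ c) :
    (‖(x - a) * (y - a)‖ / (‖b - a‖ * ‖c - a‖) -
     ‖(x - b) * (y - b)‖ / (‖a - b‖ * ‖c - b‖) -
     ‖(x - c) * (y - c)‖ / (‖a - c‖ * ‖b - c‖) = 1) ↔
    ((∃ r : ℝ, 0 ≤ r ∧ (x - a) * (y - a) / ((b - a) * (c - a)) = (r : ℂ)) ∧
     (∃ r : ℝ, r ≤ 0 ∧ (x - b) * (y - b) / ((a - b) * (c - b)) = (r : ℂ)) ∧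
     (∃ r : ℝ, r ≤ 0 ∧ (x - c) * (y - c) / ((a - c) * (b - c)) = (r : ℂ))) := by
  have key := norm_sub_norm_sub_norm_eq_one_iff (lagrange_quadratic_sum_eq_one hab hac hbc x y)
  simpa only [norm_div, norm_mul] using key
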